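/- Let $Q_r \subset \mathbb{R}^n$ be a closed cube of side $r > 0$, centered so that the concentric open cube $\mathring{Q}_{2r}$ of side $2r$ contains it, and let $A \subseteq \mathbb{R}^n$ be open with $\min\{|A \cap Q_r|, |Q_r \setminus \overline{A}|\} \ge c_\sharp r^n$ for some $c_\sharp \in (0,1)$. Then for any $k \in \mathbb{N}$ there exists a finite family $\{Q^{(j)}\}_{j=1}^N$ of pairwise non-overlapping closed cubes of side $r/k$, each contained in $\mathring{Q}_{2r}$ and centered at some point $x_j \in Q_r \cap \partial A$, with $N \ge c_{\star\star} k^{n-1}$ for some $c_{\star\star} \in (0,1)$ depending only on $n$ and $c_\sharp$. -/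

import Mathlib

open MeasureTheory Set

/-- Closed cube of side `a` centered at `c`. -/
def closedCube (n : ℕ) (c : Fin n → ℝ) (a : ℝ) : Set (Fin n → ℝ) :=
  {y | ∀ i, |y i - c i| ≤ a / 2}

/-- Open cube of side `a` centered at `c`. -/
def openCube (n : ℕ) (c : Fin n → ℝ) (a : ℝ) : Set (Fin n → ℝ) :=
  {y | ∀ i, |y i - c i| < a / 2}

/-!
Subdivide `Q_r` into `k ^ n` grid cubes of side `r / k`, and call a cell a boundary cell if it
meets both `A` and its complement; being connected, such a cell meets `∂A`. The volume hypothesis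
forces at least `c♯ k ^ n` cells to meet `A` and as many to meet its complement. Walking from a
cell inside `A` to a cell outside `A` along a staircase that changes one coordinate at a time, one
must cross a boundary cell, and a boundary cell together with the direction of the crossing
determines the pair up to `k ^ (n + 1)` choices. Hence `#inside * #outside ≤ n k ^ (n + 1)
#boundary`, which leaves at least `c♯² k ^ (n - 1) / (4 n)` boundary cells. At least a `2⁻ⁿ`
fraction of them share the parity pattern of their indices; two such cells are two steps apart in
some coordinate, so the cubes of side `r / k` centred at frontier points chosen in them do not
overlap.
-/

open Finset Function

variable {n k : ℕ}

lemma closedCube_eq_Icc (c : Fin n → ℝ) (a : ℝ) :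
    closedCube n c a = Set.Icc (fun i => c i - a / 2) (fun i => c i + a / 2) := by
  ext y
  simp only [closedCube, mem_ofPred_eq, Set.mem_Icc, Pi.le_def, abs_sub_le_iff, ← forall_and]
  exact forall_congr' fun i => by constructor <;> rintro ⟨h₁, h₂⟩ <;> constructor <;> linarith

lemma openCube_eq_pi (c : Fin n → ℝ) (a : ℝ) :
    openCube n c a = Set.pi univ fun i => Ioo (c i - a / 2) (c i + a / 2) := by
  ext y
  simp only [openCube, mem_ofPred_eq, Set.mem_pi, Set.mem_univ, true_imp_iff, Set.mem_Ioo,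
    abs_sub_lt_iff]
  exact forall_congr' fun i => by constructor <;> rintro ⟨h₁, h₂⟩ <;> constructor <;> linarith

lemma volume_closedCube (c : Fin n → ℝ) (a : ℝ) :
    volume (closedCube n c a) = ENNReal.ofReal a ^ n := by
  simp [closedCube_eq_Icc, Real.volume_Icc_pi]

lemma volume_closedCube_ne_top (c : Fin n → ℝ) (a : ℝ) : volume (closedCube n c a) ≠ ⊤ := by
  simp [volume_closedCube]

lemma openCube_ae_eq_closedCube (c : Fin n → ℝ) (a : ℝ) :
    openCube n c a =ᵐ[volume] closedCube n c a := by
  rw [openCube_eq_pi, closedCube_eq_Icc, volume_pi]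
  exact Measure.univ_pi_Ioo_ae_eq_Icc

lemma openCube_subset_closedCube (c : Fin n → ℝ) (a : ℝ) : openCube n c a ⊆ closedCube n c a :=
  fun _ hy i => (hy i).le

lemma convex_closedCube (c : Fin n → ℝ) (a : ℝ) : Convex ℝ (closedCube n c a) := by
  rw [closedCube_eq_Icc]
  exact convex_Icc _ _

lemma convex_openCube (c : Fin n → ℝ) (a : ℝ) : Convex ℝ (openCube n c a) := by
  rw [openCube_eq_pi]
  exact convex_pi fun _ _ => convex_Ioo _ _

lemma closedCube_subset_closedCube {x c : Fin n → ℝ} {a b : ℝ}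
    (h : ∀ i, |x i - c i| + b / 2 ≤ a / 2) : closedCube n x b ⊆ closedCube n c a :=
  fun y hy i => (abs_sub_le (y i) (x i) (c i)).trans (by linarith [hy i, h i])

lemma closedCube_subset_openCube {x c : Fin n → ℝ} {a b : ℝ}
    (h : ∀ i, |x i - c i| + b / 2 < a / 2) : closedCube n x b ⊆ openCube n c a :=
  fun y hy i => (abs_sub_le (y i) (x i) (c i)).trans_lt (by linarith [hy i, h i])

lemma disjoint_openCube_of_mem_closedCube {u v x y : Fin n → ℝ} {b : ℝ}
    (hx : x ∈ closedCube n u b) (hy : y ∈ closedCube n v b) (i : Fin n)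
    (huv : 2 * b ≤ |u i - v i|) : Disjoint (openCube n x b) (openCube n y b) := by
  refine Set.disjoint_left.2 fun z hzx hzy => ?_
  obtain ⟨hx₁, hx₂⟩ := abs_le.1 (hx i)
  obtain ⟨hy₁, hy₂⟩ := abs_le.1 (hy i)
  obtain ⟨hzx₁, hzx₂⟩ := abs_lt.1 (hzx i)
  obtain ⟨hzy₁, hzy₂⟩ := abs_lt.1 (hzy i)
  exact huv.not_gt (abs_sub_lt_iff.2 ⟨by linarith, by linarith⟩)

lemma IsPreconnected.inter_frontier_nonempty {X : Type*} [TopologicalSpace X] {s t : Set X}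
    (hs : IsPreconnected s) (hst : (s ∩ t).Nonempty) (hsdt : (s \ t).Nonempty) :
    (s ∩ frontier t).Nonempty := by
  by_contra h
  have hcover : s ⊆ interior t ∪ (closure t)ᶜ := fun x hx => by
    by_cases hxt : x ∈ closure t
    · exact Or.inl (by_contra fun hxi => h ⟨x, hx, hxt, hxi⟩)
    · exact Or.inr hxt
  obtain hsub | hsub := hs.subset_or_subset isOpen_interior isClosed_closure.isOpen_compl
    (disjoint_compl_right.mono_left interior_subset_closure) hcover
  · obtain ⟨x, hxs, hxt⟩ := hsdt
    exact hxt (interior_subset (hsub hxs))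
  · obtain ⟨x, hxs, hxt⟩ := hst
    exact hsub hxs (subset_closure hxt)

lemma exists_mem_openCube_inter_frontier {c : Fin n → ℝ} {a : ℝ} {A : Set (Fin n → ℝ)}
    (hA : volume (A ∩ closedCube n c a) ≠ 0) (hAc : volume (closedCube n c a \ A) ≠ 0) :
    (openCube n c a ∩ frontier A).Nonempty := by
  have hae := openCube_ae_eq_closedCube c a
  refine (convex_openCube c a).isPreconnected.inter_frontier_nonempty ?_ ?_
  · rw [inter_comm]
    exact nonempty_of_measure_ne_zero (by rwa [measure_congr ((ae_eq_refl A).inter hae)])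
  · exact nonempty_of_measure_ne_zero (by rwa [measure_congr (hae.diff (ae_eq_refl A))])

lemma Fin.iff_of_iff_succ {q : Fin k → Prop}
    (h : ∀ a b : Fin k, (b : ℕ) = a + 1 → (q a ↔ q b)) (a b : Fin k) : q a ↔ q b := by
  have hzero : ∀ (m : ℕ) (hm : m < k), q ⟨m, hm⟩ ↔ q ⟨0, by omega⟩ := by
    intro m
    induction m with
    | zero => exact fun _ => Iff.rfl
    | succ m ih => exact fun hm => (h ⟨m, by omega⟩ ⟨m + 1, hm⟩ rfl).symm.trans (ih _)
  exact (hzero a a.2).trans (hzero b b.2).symm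

section Staircase

variable {β : Type*}

def prefixSplice (t : ℕ) (z x : Fin n → β) : Fin n → β :=
  fun i => if (i : ℕ) < t then z i else x i

@[simp] lemma prefixSplice_zero (z x : Fin n → β) : prefixSplice 0 z x = x := by
  ext i
  simp [prefixSplice]

@[simp] lemma prefixSplice_self (z x : Fin n → β) : prefixSplice n z x = z := by
  ext i
  simp [prefixSplice]

lemma update_prefixSplice_self (j : Fin n) (z x : Fin n → β) :
    update (prefixSplice j z x) j (x j) = prefixSplice j z x := by
  simp [prefixSplice]

lemma update_prefixSplice_eq_prefixSplice_succ (j : Fin n) (z x : Fin n → β) :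
    update (prefixSplice j z x) j (z j) = prefixSplice (j + 1) z x := by
  ext i
  rcases lt_trichotomy i j with h | rfl | h
  · simp [prefixSplice, h.ne, Fin.lt_def.1 h, Nat.lt_succ_of_lt (Fin.lt_def.1 h)]
  · simp [prefixSplice]
  · simp [prefixSplice, h.ne', h.not_ge, (Fin.lt_def.1 h).not_gt]

end Staircase

/-- `P` takes the same value on any two cells outside `F` that differ by one in a single
coordinate. -/
def LocallyConstantOff (F : Finset (Fin n → Fin k)) (P : (Fin n → Fin k) → Prop) : Prop :=
  ∀ (w : Fin n → Fin k) (j : Fin n) (a b : Fin k), (b : ℕ) = a + 1 →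
    update w j a ∉ F → update w j b ∉ F → (P (update w j a) ↔ P (update w j b))

namespace LocallyConstantOff

variable {F : Finset (Fin n → Fin k)} {P : (Fin n → Fin k) → Prop}

lemma iff_of_forall_update_prefixSplice_notMem (h : LocallyConstantOff F P)
    {x z : Fin n → Fin k} (hF : ∀ (j : Fin n) m, update (prefixSplice j z x) j m ∉ F) :
    P x ↔ P z := by
  have key : ∀ t ≤ n, P x ↔ P (prefixSplice t z x) := by
    intro t ht
    induction t with
    | zero => rw [prefixSplice_zero]
    | succ t ih =>
      let j : Fin n := ⟨t, ht⟩
      have hline := Fin.iff_of_iff_succ (q := fun m => P (update (prefixSplice j z x) j m))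
        (fun a b hab => h _ j a b hab (hF j a) (hF j b)) (x j) (z j)
      rw [update_prefixSplice_self, update_prefixSplice_eq_prefixSplice_succ] at hline
      exact (ih (by omega)).trans hline
  simpa using key n le_rfl

lemma card_mul_card_le [DecidablePred P] (h : LocallyConstantOff F P) :
    #{x | x ∉ F ∧ P x} * #{z | z ∉ F ∧ ¬P z} ≤ n * #F * k ^ n * k := by
  set G : Finset (Fin n → Fin k) := {x | x ∉ F ∧ P x}
  set H : Finset (Fin n → Fin k) := {z | z ∉ F ∧ ¬P z}
  set T := (Finset.univ : Finset (Fin n)) ×ˢ F ×ˢ (Finset.univ : Finset (Fin n → Fin k)) ×ˢ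
    (Finset.univ : Finset (Fin k))
  -- `(x, z)` is recovered from the boundary cell `f` crossed in direction `j` on its staircase,
  -- the coordinates `g` of `x` up to `j` and of `z` after `j`, and `a = z j`.
  let decode : Fin n × (Fin n → Fin k) × (Fin n → Fin k) × Fin k →
      (Fin n → Fin k) × (Fin n → Fin k) := fun ⟨j, f, g, a⟩ =>
    (fun i => if i ≤ j then g i else f i, update (fun i => if i < j then f i else g i) j a)
  have hsub : G ×ˢ H ⊆ T.image decode := by
    rintro ⟨x, z⟩ hxz
    simp only [G, H, Finset.mem_product, Finset.mem_filter, Finset.mem_univ, true_and] at hxz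
    obtain ⟨j, m, hjm⟩ : ∃ (j : Fin n) (m : Fin k), update (prefixSplice j z x) j m ∈ F := by
      by_contra! hF
      exact hxz.2.2 ((h.iff_of_forall_update_prefixSplice_notMem hF).1 hxz.1.2)
    refine Finset.mem_image.2
      ⟨(j, _, fun i => if i ≤ j then x i else z i, z j), by simpa [T] using hjm, ?_⟩
    ext i
    all_goals
      rcases lt_trichotomy i j with hij | rfl | hij
      · simp [decode, prefixSplice, hij.le, hij, hij.ne]
      · simp [decode]
      · simp [decode, prefixSplice, hij.not_ge, hij.not_gt, hij.ne', (Fin.lt_def.1 hij).not_gt]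
  calc #G * #H = #(G ×ˢ H) := (card_product _ _).symm
    _ ≤ #(T.image decode) := card_le_card hsub
    _ ≤ #T := card_image_le
    _ = n * #F * k ^ n * k := by simp [T, card_product, mul_assoc]

end LocallyConstantOff

lemma exists_fin_le_le (hk : 0 < k) {s : ℝ} (hs₀ : 0 ≤ s) (hsk : s ≤ k) :
    ∃ m : Fin k, (m : ℝ) ≤ s ∧ s ≤ m + 1 := by
  rcases hsk.lt_or_eq with hlt | rfl
  · exact ⟨⟨⌊s⌋₊, (Nat.floor_lt hs₀).2 hlt⟩, Nat.floor_le hs₀, (Nat.lt_floor_add_one s).le⟩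
  · refine ⟨⟨k - 1, by omega⟩, ?_, ?_⟩ <;> simp [Nat.cast_sub (show 1 ≤ k from hk)]

section Grid

variable (c : Fin n → ℝ) (r : ℝ)

/-- Centre of the cell `α` of the subdivision of `closedCube n c r` into `k ^ n` cubes. -/
noncomputable def gridCenter (α : Fin n → Fin k) : Fin n → ℝ :=
  fun i => c i - r / 2 + ((α i : ℕ) + 1 / 2) * (r / k)

def gridCube (α : Fin n → Fin k) : Set (Fin n → ℝ) :=
  closedCube n (gridCenter c r α) (r / k)

variable {c r}

lemma abs_gridCenter_sub_add_le (hr : 0 ≤ r) (α : Fin n → Fin k) (i : Fin n) :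
    |gridCenter c r α i - c i| + r / k / 2 ≤ r / 2 := by
  have hk : (0 : ℝ) < k := by exact_mod_cast Fin.pos (α i)
  have h₀ : 0 ≤ ((α i : ℕ) : ℝ) * (r / k) := by positivity
  have h₁ : (((α i : ℕ) : ℝ) + 1) * (r / k) ≤ r :=
    calc _ ≤ (k : ℝ) * (r / k) := by gcongr; exact_mod_cast (α i).isLt
      _ = r := by field_simp
  have : |gridCenter c r α i - c i| ≤ r / 2 - r / k / 2 :=
    abs_le.2 ⟨by simp only [gridCenter]; linarith, by simp only [gridCenter]; linarith⟩
  linarith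

lemma gridCube_subset_closedCube (hr : 0 ≤ r) (α : Fin n → Fin k) :
    gridCube c r α ⊆ closedCube n c r :=
  closedCube_subset_closedCube (abs_gridCenter_sub_add_le hr α)

lemma closedCube_subset_iUnion_gridCube (hr : 0 < r) (hk : 0 < k) :
    closedCube n c r ⊆ ⋃ α : Fin n → Fin k, gridCube c r α := by
  intro y hy
  have hrk : 0 < r / k := by positivity
  have hs : ∀ i, ∃ m : Fin k, (m : ℝ) ≤ (y i - c i + r / 2) / (r / k) ∧
      (y i - c i + r / 2) / (r / k) ≤ m + 1 := fun i => by
    obtain ⟨h₁, h₂⟩ := abs_le.1 (hy i)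
    refine exists_fin_le_le hk (div_nonneg (by linarith) hrk.le) ?_
    rw [div_le_iff₀ hrk, show (k : ℝ) * (r / k) = r by field_simp]
    linarith
  choose α hα using hs
  refine mem_iUnion.2 ⟨α, fun i => ?_⟩
  obtain ⟨h₁, h₂⟩ := hα i
  rw [le_div_iff₀ hrk] at h₁
  rw [div_le_iff₀ hrk] at h₂
  simp only [gridCenter]
  exact abs_le.2 ⟨by linarith, by linarith⟩

lemma gridCenter_sub_gridCenter (α β : Fin n → Fin k) (i : Fin n) :
    gridCenter c r α i - gridCenter c r β i = (((α i : ℕ) : ℝ) - (β i : ℕ)) * (r / k) := by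
  simp only [gridCenter]
  ring

lemma two_mul_le_abs_gridCenter_sub (hr : 0 ≤ r) {α β : Fin n → Fin k} {i : Fin n}
    (h : (α i : ℕ) + 2 ≤ β i ∨ (β i : ℕ) + 2 ≤ α i) :
    2 * (r / k) ≤ |gridCenter c r α i - gridCenter c r β i| := by
  rw [gridCenter_sub_gridCenter, abs_mul, abs_of_nonneg (by positivity : 0 ≤ r / k)]
  gcongr
  rcases h with h | h
  · have : ((α i : ℕ) : ℝ) + 2 ≤ (β i : ℕ) := by exact_mod_cast h
    exact le_abs.2 (Or.inr (by linarith))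
  · have : ((β i : ℕ) : ℝ) + 2 ≤ (α i : ℕ) := by exact_mod_cast h
    exact le_abs.2 (Or.inl (by linarith))

lemma gridCube_update_inter_nonempty (hr : 0 ≤ r) (w : Fin n → Fin k) (j : Fin n) {a b : Fin k}
    (hab : (b : ℕ) = a + 1) :
    (gridCube c r (update w j a) ∩ gridCube c r (update w j b)).Nonempty := by
  have hrk : 0 ≤ r / k / 2 := by positivity
  refine ⟨update (gridCenter c r w) j (c j - r / 2 + ((a : ℕ) + 1) * (r / k)), ?_, ?_⟩
  all_goals
    intro i
    rcases eq_or_ne i j with rfl | hij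
    · simp only [gridCenter, update_self, hab, Nat.cast_add, Nat.cast_one]
      exact abs_le.2 ⟨by linarith, by linarith⟩
    · simpa [gridCenter, hij] using hrk

lemma toReal_volume_le_card_mul (hr : 0 ≤ r) {B : Set (Fin n → ℝ)} {S : Finset (Fin n → Fin k)}
    (hB : B ⊆ ⋃ α ∈ S, gridCube c r α) : (volume B).toReal ≤ #S * (r / k) ^ n := by
  have hle : volume B ≤ #S * ENNReal.ofReal (r / k) ^ n :=
    calc volume B ≤ volume (⋃ α ∈ S, gridCube c r α) := measure_mono hB
      _ ≤ ∑ α ∈ S, volume (gridCube c r α) := measure_biUnion_finset_le S _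
      _ = #S * ENNReal.ofReal (r / k) ^ n := by simp [gridCube, volume_closedCube]
  have := ENNReal.toReal_mono (by simp [ENNReal.mul_eq_top]) hle
  simpa [ENNReal.toReal_ofReal (by positivity : 0 ≤ r / k)] using this

lemma mul_pow_le_card_of_subset (hr : 0 < r) (hk : 0 < k) {csharp : ℝ} {B : Set (Fin n → ℝ)}
    {S : Finset (Fin n → Fin k)} (hB : B ⊆ ⋃ α ∈ S, gridCube c r α)
    (hvol : csharp * r ^ n ≤ (volume B).toReal) : csharp * k ^ n ≤ #S := by
  have hrk : 0 < (r / k) ^ n := by positivity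
  refine le_of_mul_le_mul_right ?_ hrk
  calc csharp * k ^ n * (r / k) ^ n = csharp * r ^ n := by
        rw [mul_assoc, ← mul_pow, mul_div_cancel₀ _ (by positivity)]
    _ ≤ _ := hvol.trans (toReal_volume_le_card_mul hr.le hB)

end Grid

lemma subset_iff_mem_of_not_nonempty {X : Type*} {Q A : Set X} {p : X}
    (h : ¬((Q ∩ A).Nonempty ∧ (Q \ A).Nonempty)) (hp : p ∈ Q) : Q ⊆ A ↔ p ∈ A :=
  ⟨fun hQ => hQ hp, fun hpA x hx => by_contra fun hxA => h ⟨⟨p, hp, hpA⟩, x, hx, hxA⟩⟩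

lemma min_le_of_mul_le {a f g h M : ℝ} (ha : 0 ≤ a) (hM : 0 < M) (hg : 2 * a ≤ f + g)
    (hh : 2 * a ≤ f + h) (hgh : g * h ≤ M * f) : min a (a ^ 2 / M) ≤ f := by
  by_cases hf : a ≤ f
  · exact (min_le_left _ _).trans hf
  · refine (min_le_right _ _).trans ?_
    rw [div_le_iff₀' hM]
    nlinarith

lemma exists_subset_separated {ι : Type*} [Fintype ι] (T : Finset (ι → Fin k)) :
    ∃ S ⊆ T, (#T : ℝ) ≤ 2 ^ Fintype.card ι * #S ∧
      ∀ α ∈ S, ∀ β ∈ S, α ≠ β → ∃ i, (α i : ℕ) + 2 ≤ β i ∨ (β i : ℕ) + 2 ≤ α i := by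
  classical
  let parity : (ι → Fin k) → ι → ZMod 2 := fun α i => ((α i : ℕ) : ZMod 2)
  obtain ⟨y, -, hy⟩ := exists_le_card_fiber_of_nsmul_le_card_of_maps_to (s := T) (f := parity)
    (b := (#T : ℝ) / 2 ^ Fintype.card ι) (fun _ _ => Finset.mem_univ _) Finset.univ_nonempty
    (by simp [mul_div_cancel₀])
  refine ⟨{α ∈ T | parity α = y}, filter_subset _ _, ?_, fun α hα β hβ hne => ?_⟩
  · rwa [div_le_iff₀' (by positivity)] at hy
  · obtain ⟨i, hi⟩ := Function.ne_iff.1 hne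
    have hmod := congrFun ((mem_filter.1 hα).2.trans (mem_filter.1 hβ).2.symm) i
    rw [ZMod.natCast_eq_natCast_iff'] at hmod
    have : (α i : ℕ) ≠ β i := Fin.val_ne_of_ne hi
    exact ⟨i, by omega⟩

section BoundaryCells

open Classical in
noncomputable def boundaryCells (k : ℕ) (c : Fin n → ℝ) (r : ℝ) (A : Set (Fin n → ℝ)) :
    Finset (Fin n → Fin k) :=
  {α | (gridCube c r α ∩ A).Nonempty ∧ (gridCube c r α \ A).Nonempty}

variable {c : Fin n → ℝ} {r : ℝ} {A : Set (Fin n → ℝ)}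

lemma mem_boundaryCells {α : Fin n → Fin k} : α ∈ boundaryCells k c r A ↔
    (gridCube c r α ∩ A).Nonempty ∧ (gridCube c r α \ A).Nonempty := by
  simp [boundaryCells]

lemma gridCube_inter_frontier_nonempty {α : Fin n → Fin k} (hα : α ∈ boundaryCells k c r A) :
    (gridCube c r α ∩ frontier A).Nonempty :=
  (convex_closedCube _ _).isPreconnected.inter_frontier_nonempty (mem_boundaryCells.1 hα).1
    (mem_boundaryCells.1 hα).2

lemma locallyConstantOff_boundaryCells (hr : 0 ≤ r) :
    LocallyConstantOff (boundaryCells k c r A) (fun α => gridCube c r α ⊆ A) := by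
  intro w j a b hab ha hb
  dsimp only
  obtain ⟨p, hpa, hpb⟩ := gridCube_update_inter_nonempty (c := c) hr w j hab
  rw [subset_iff_mem_of_not_nonempty (mt mem_boundaryCells.2 ha) hpa,
    subset_iff_mem_of_not_nonempty (mt mem_boundaryCells.2 hb) hpb]

open Classical in
lemma mul_pow_le_card_boundaryCells_add_inside (hr : 0 < r) (hk : 0 < k) {csharp : ℝ}
    (hA : csharp * r ^ n ≤ (volume (A ∩ closedCube n c r)).toReal) :
    csharp * k ^ n ≤ #(boundaryCells k c r A) +
      #{α | α ∉ boundaryCells k c r A ∧ gridCube c r α ⊆ A} := by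
  refine (mul_pow_le_card_of_subset (c := c) hr hk (fun y hy => ?_) hA).trans
    (by exact_mod_cast Finset.card_union_le _ _)
  obtain ⟨α, hα⟩ := mem_iUnion.1 (closedCube_subset_iUnion_gridCube hr hk hy.2)
  refine mem_iUnion₂.2 ⟨α, ?_, hα⟩
  by_cases hαF : α ∈ boundaryCells k c r A
  · simp [hαF]
  · simp [hαF, (subset_iff_mem_of_not_nonempty (mt mem_boundaryCells.2 hαF) hα).2 hy.1]

open Classical in
lemma mul_pow_le_card_boundaryCells_add_outside (hr : 0 < r) (hk : 0 < k) {csharp : ℝ}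
    (hAc : csharp * r ^ n ≤ (volume (closedCube n c r \ A)).toReal) :
    csharp * k ^ n ≤ #(boundaryCells k c r A) +
      #{α | α ∉ boundaryCells k c r A ∧ ¬gridCube c r α ⊆ A} := by
  refine (mul_pow_le_card_of_subset (c := c) hr hk (fun y hy => ?_) hAc).trans
    (by exact_mod_cast Finset.card_union_le _ _)
  obtain ⟨α, hα⟩ := mem_iUnion.1 (closedCube_subset_iUnion_gridCube hr hk hy.1)
  refine mem_iUnion₂.2 ⟨α, ?_, hα⟩
  by_cases hαF : α ∈ boundaryCells k c r A
  · simp [hαF]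
  · simpa [hαF] using fun h : gridCube c r α ⊆ A => hy.2 (h hα)

lemma card_boundaryCells_ge (hn : 1 ≤ n) (hr : 0 < r) (hk : 0 < k) {csharp : ℝ}
    (hc₀ : 0 ≤ csharp) (hc₁ : csharp ≤ 1)
    (hA : csharp * r ^ n ≤ (volume (A ∩ closedCube n c r)).toReal)
    (hAc : csharp * r ^ n ≤ (volume (closedCube n c r \ A)).toReal) :
    csharp ^ 2 / (4 * n) * k ^ (n - 1) ≤ #(boundaryCells k c r A) := by
  classical
  set F := boundaryCells k c r A
  have hG := mul_pow_le_card_boundaryCells_add_inside hr hk hA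
  have hH := mul_pow_le_card_boundaryCells_add_outside hr hk hAc
  have hcount : ((#{α | α ∉ F ∧ gridCube c r α ⊆ A} : ℕ) : ℝ) *
      #{α | α ∉ F ∧ ¬gridCube c r α ⊆ A} ≤ (n * k ^ n * k) * #F := by
    exact_mod_cast (locallyConstantOff_boundaryCells hr.le).card_mul_card_le.trans_eq (by ring)
  refine le_trans ?_ (min_le_of_mul_le (a := csharp * k ^ n / 2) (by positivity) (by positivity)
    (by linarith) (by linarith) hcount)
  obtain ⟨m, rfl⟩ : ∃ m, n = m + 1 := ⟨n - 1, by omega⟩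
  rw [add_tsub_cancel_right, le_min_iff]
  constructor
  · have hc : csharp ^ 2 / (4 * (m + 1 : ℕ)) ≤ csharp / 2 := by
      rw [div_le_div_iff₀ (by positivity) two_pos]
      push_cast
      nlinarith
    calc csharp ^ 2 / (4 * (m + 1 : ℕ)) * k ^ m ≤ csharp / 2 * k ^ m * 1 := by
          rw [mul_one]
          gcongr
      _ ≤ csharp / 2 * k ^ m * k := by gcongr; exact_mod_cast hk
      _ = _ := by ring
  · apply le_of_eq
    field_simp
    ring

end BoundaryCells

lemma exists_separated_frontier_points (hn : 1 ≤ n) {csharp : ℝ} (hc₀ : 0 ≤ csharp)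
    (hc₁ : csharp ≤ 1) {r : ℝ} (hr : 0 < r) (hk : 2 ≤ k) {c : Fin n → ℝ} {A : Set (Fin n → ℝ)}
    (hA : csharp * r ^ n ≤ (volume (A ∩ closedCube n c r)).toReal)
    (hAc : csharp * r ^ n ≤ (volume (closedCube n c r \ A)).toReal) :
    ∃ (S : Finset (Fin n → Fin k)) (x : (Fin n → Fin k) → Fin n → ℝ),
      csharp ^ 2 / (n * 2 ^ (n + 2)) * k ^ (n - 1) ≤ #S ∧
      (∀ α ∈ S, x α ∈ closedCube n c r ∩ frontier A) ∧
      (∀ α ∈ S, closedCube n (x α) (r / k) ⊆ openCube n c (2 * r)) ∧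
      ∀ α ∈ S, ∀ β ∈ S, α ≠ β → Disjoint (openCube n (x α) (r / k)) (openCube n (x β) (r / k)) := by
  obtain ⟨S, hSF, hcard, hsep⟩ := exists_subset_separated (boundaryCells k c r A)
  have hx : ∀ α ∈ S, (gridCube c r α ∩ frontier A).Nonempty :=
    fun α hα => gridCube_inter_frontier_nonempty (hSF hα)
  choose! x hx using hx
  have hxQ : ∀ α ∈ S, x α ∈ closedCube n c r :=
    fun α hα => gridCube_subset_closedCube hr.le α (hx α hα).1
  refine ⟨S, x, ?_, fun α hα => ⟨hxQ α hα, (hx α hα).2⟩, fun α hα => ?_,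
    fun α hα β hβ hne => ?_⟩
  · have hF := card_boundaryCells_ge (k := k) hn hr (by omega) hc₀ hc₁ hA hAc
    rw [Fintype.card_fin] at hcard
    calc csharp ^ 2 / (n * 2 ^ (n + 2)) * k ^ (n - 1)
        = csharp ^ 2 / (4 * n) * k ^ (n - 1) / 2 ^ n := by rw [pow_add]; ring
      _ ≤ (#S : ℝ) := by
        rw [div_le_iff₀' (by positivity)]
        exact hF.trans hcard
  · have hk' : r / k / 2 < r / 2 := by
      gcongr
      exact div_lt_self hr (by exact_mod_cast hk)
    refine closedCube_subset_openCube fun i => ?_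
    linarith [hxQ α hα i]
  · obtain ⟨i, hi⟩ := hsep α hα β hβ hne
    exact disjoint_openCube_of_mem_closedCube (hx α hα).1 (hx β hβ).1 i
      (two_mul_le_abs_gridCenter_sub hr.le hi)

/-- one can find at least `c⋆⋆ k^(n-1)` non-overlapping closed cubes
of side `r/k`, contained in the open concentric double cube and centered at points
of `Q_r ∩ ∂A`. -/
theorem statement_3 (n : ℕ) (hn : 1 ≤ n) (csharp : ℝ) (hcsharp : csharp ∈ Set.Ioo (0 : ℝ) 1) :
    ∃ cstst : ℝ, cstst ∈ Set.Ioo (0 : ℝ) 1 ∧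
      ∀ (r : ℝ), 0 < r → ∀ (c : Fin n → ℝ) (A : Set (Fin n → ℝ)), IsOpen A →
        csharp * r ^ n ≤
          min (volume (A ∩ closedCube n c r)).toReal
              (volume (closedCube n c r \ closure A)).toReal →
        ∀ k : ℕ, 0 < k →
          ∃ (N : ℕ) (x : Fin N → (Fin n → ℝ)),
            cstst * (k : ℝ) ^ (n - 1) ≤ (N : ℝ) ∧
            (∀ j, x j ∈ closedCube n c r ∩ frontier A) ∧
            (∀ j, closedCube n (x j) (r / k) ⊆ openCube n c (2 * r)) ∧
            (∀ i j, i ≠ j →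
              Disjoint (openCube n (x i) (r / k)) (openCube n (x j) (r / k))) := by
  obtain ⟨hc₀, hc₁⟩ := hcsharp
  have hconst : csharp ^ 2 / (n * 2 ^ (n + 2)) < 1 := by
    rw [div_lt_one (by positivity)]
    have : (1 : ℝ) ≤ n := by exact_mod_cast hn
    nlinarith [one_le_pow₀ (M₀ := ℝ) (a := 2) (n := n + 2) one_le_two]
  refine ⟨_, ⟨by positivity, hconst⟩, fun r hr c A _ hvol k hk => ?_⟩
  have hpos : 0 < csharp * r ^ n := by positivity
  have hA := hvol.trans (min_le_left _ _)
  have hAc : csharp * r ^ n ≤ (volume (closedCube n c r \ A)).toReal :=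
    (hvol.trans (min_le_right _ _)).trans <| ENNReal.toReal_mono
      (measure_ne_top_of_subset sdiff_subset (volume_closedCube_ne_top c r))
      (measure_mono (sdiff_subset_sdiff_right subset_closure))
  obtain rfl | hk := (show k = 1 ∨ 2 ≤ k by omega)
  · -- a frontier point on `∂Q_r` would not do: the cube of side `r` around it touches `∂Q_{2r}`
    obtain ⟨x, hxQ, hxA⟩ := exists_mem_openCube_inter_frontier (c := c) (a := r) (A := A)
      (fun h => by simp [h] at hA; linarith) (fun h => by simp [h] at hAc; linarith)
    refine ⟨1, fun _ => x, by simpa using hconst.le,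
      fun _ => ⟨openCube_subset_closedCube c r hxQ, hxA⟩,
      fun _ => closedCube_subset_openCube fun i => by linarith [hxQ i],
      fun i j hij => (hij (Subsingleton.elim i j)).elim⟩
  · obtain ⟨S, x, hcard, hmem, hsub, hdisj⟩ :=
      exists_separated_frontier_points hn hc₀.le hc₁.le hr hk hA hAc
    let e := S.equivFin.symm
    refine ⟨#S, fun j => x (e j), hcard, fun j => hmem _ (e j).2, fun j => hsub _ (e j).2,
      fun i j hij => hdisj _ (e i).2 _ (e j).2 fun h => hij (e.injective (Subtype.ext h))⟩
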